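/- arXiv:1408.2759 — 3 statements merged into one kernel-verified Lean document; each statement's English description precedes it below -/
import Mathlib

section
/- Let Π be a measure on ℝ with ∫ |y|² dΠ(y) < ∞ and ∫ |y|^{2γ+2} dΠ(y) < ∞ for a natural number γ. Let σ : [0,T] × ℝ → ℝ be bounded by C_σ. Then there is a constant C such that for all (t,x), ∫ | |x + σ(t,x) y|^{2γ+2} − |x|^{2γ+2} − (2γ+2)|x|^{2γ} x σ(t,x) y | dΠ(y) ≤ C (1 + |x|^{2γ}). -/
open MeasureTheory

/-!
Since `2γ + 2` is even, `|z| ^ (2γ + 2) = z ^ (2γ + 2)`, and the integrand is the binomial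
remainder, for `n = 2γ`, `(x + h)^(n+2) - x^(n+2) - (n+2) x^(n+1) h = h² ∑_{k ≤ n} C(n+2,k) x^k h^(n-k)`
with `h = σ(t,x) y`. Each term is at most `(|x|^n + |h|^n) h²`, so the remainder is bounded by
`2^(n+2) (|x|^n h² + |h|^(n+2))`; with `|h| ≤ Cσ |y|` this is dominated by
`|x|^(2γ) |y|² + |y|^(2γ+2)` up to constants, and the two moment assumptions finish the proof.
-/

lemma pow_mul_pow_sub_le_pow_add_pow {a b : ℝ} (ha : 0 ≤ a) (hb : 0 ≤ b) {k n : ℕ} (hk : k ≤ n) :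
    a ^ k * b ^ (n - k) ≤ a ^ n + b ^ n := by
  rcases le_total a b with hab | hab
  · calc a ^ k * b ^ (n - k) ≤ b ^ k * b ^ (n - k) := by gcongr
      _ = b ^ n := by rw [← pow_add, Nat.add_sub_cancel' hk]
      _ ≤ a ^ n + b ^ n := le_add_of_nonneg_left (by positivity)
  · calc a ^ k * b ^ (n - k) ≤ a ^ k * a ^ (n - k) := by gcongr
      _ = a ^ n := by rw [← pow_add, Nat.add_sub_cancel' hk]
      _ ≤ a ^ n + b ^ n := le_add_of_nonneg_right (by positivity)

lemma sum_range_choose_le_two_pow (n m : ℕ) (hm : m ≤ n + 1) :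
    ∑ k ∈ Finset.range m, (n.choose k : ℝ) ≤ 2 ^ n := by
  have h := Finset.sum_le_sum_of_subset (f := n.choose) (Finset.range_subset_range.mpr hm)
  rw [Nat.sum_range_choose] at h
  exact_mod_cast h

lemma add_pow_sub_pow_sub_mul_eq (n : ℕ) (x h : ℝ) :
    (x + h) ^ (n + 2) - x ^ (n + 2) - (n + 2) * x ^ (n + 1) * h
      = h ^ 2 * ∑ k ∈ Finset.range (n + 1), x ^ k * h ^ (n - k) * ((n + 2).choose k : ℝ) := by
  have hsplit : ∑ k ∈ Finset.range (n + 1), x ^ k * h ^ (n + 2 - k) * ((n + 2).choose k : ℝ)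
      = h ^ 2 * ∑ k ∈ Finset.range (n + 1), x ^ k * h ^ (n - k) * ((n + 2).choose k : ℝ) := by
    rw [Finset.mul_sum]
    refine Finset.sum_congr rfl fun k hk => ?_
    rw [Nat.sub_add_comm (Finset.mem_range_succ_iff.mp hk), pow_add]
    ring
  rw [add_pow, Finset.sum_range_succ, Finset.sum_range_succ, hsplit,
    Nat.choose_succ_self_right, Nat.choose_self, Nat.sub_self,
    show n + 2 - (n + 1) = 1 by omega]
  push_cast
  ring

lemma abs_add_pow_sub_pow_sub_mul_le (n : ℕ) (x h : ℝ) :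
    |(x + h) ^ (n + 2) - x ^ (n + 2) - (n + 2) * x ^ (n + 1) * h|
      ≤ 2 ^ (n + 2) * (|x| ^ n + |h| ^ n) * h ^ 2 := by
  rw [add_pow_sub_pow_sub_mul_eq, abs_mul, abs_sq, mul_comm (h ^ 2)]
  gcongr
  calc |∑ k ∈ Finset.range (n + 1), x ^ k * h ^ (n - k) * ((n + 2).choose k : ℝ)|
      ≤ ∑ k ∈ Finset.range (n + 1), ((n + 2).choose k : ℝ) * (|x| ^ n + |h| ^ n) := by
        refine (Finset.abs_sum_le_sum_abs _ _).trans (Finset.sum_le_sum fun k hk => ?_)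
        rw [abs_mul, abs_mul, abs_pow, abs_pow, Nat.abs_cast, mul_comm]
        gcongr
        exact pow_mul_pow_sub_le_pow_add_pow (abs_nonneg x) (abs_nonneg h)
          (Finset.mem_range_succ_iff.mp hk)
    _ ≤ 2 ^ (n + 2) * (|x| ^ n + |h| ^ n) := by
        rw [← Finset.sum_mul]
        gcongr
        exact sum_range_choose_le_two_pow _ _ (by omega)

lemma abs_abs_add_pow_sub_abs_pow_sub_mul_le (m : ℕ) (x h : ℝ) :
    |(|x + h|) ^ (2 * m + 2) - |x| ^ (2 * m + 2) - ((2 * m + 2 : ℝ) * |x| ^ (2 * m) * x) * h|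
      ≤ 2 ^ (2 * m + 2) * (|x| ^ (2 * m) * h ^ 2 + |h| ^ (2 * m + 2)) := by
  have heven : Even (2 * m) := even_two_mul m
  rw [(heven.add even_two).pow_abs, (heven.add even_two).pow_abs, heven.pow_abs,
    mul_assoc _ _ x, ← pow_succ]
  calc _ ≤ 2 ^ (2 * m + 2) * (|x| ^ (2 * m) + |h| ^ (2 * m)) * h ^ 2 := by
        exact_mod_cast abs_add_pow_sub_pow_sub_mul_le (2 * m) x h
    _ = _ := by rw [← heven.pow_abs x, ← sq_abs h]; ring

lemma lintegral_ofReal_le_of_le_mul_add_mul {α : Type*} [MeasurableSpace α] {μ : Measure α}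
    {F f g : α → ℝ} {a b : ℝ} (ha : 0 ≤ a) (hb : 0 ≤ b) (hf : ∀ y, 0 ≤ f y) (hg : ∀ y, 0 ≤ g y)
    (hf_meas : Measurable f) (hf_fin : ∫⁻ y, ENNReal.ofReal (f y) ∂μ < ⊤)
    (hg_fin : ∫⁻ y, ENNReal.ofReal (g y) ∂μ < ⊤) (hF : ∀ y, F y ≤ a * f y + b * g y) :
    ∫⁻ y, ENNReal.ofReal (F y) ∂μ ≤ ENNReal.ofReal
      (a * (∫⁻ y, ENNReal.ofReal (f y) ∂μ).toReal + b * (∫⁻ y, ENNReal.ofReal (g y) ∂μ).toReal) := by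
  calc ∫⁻ y, ENNReal.ofReal (F y) ∂μ
      ≤ ∫⁻ y, ENNReal.ofReal a * ENNReal.ofReal (f y) + ENNReal.ofReal b * ENNReal.ofReal (g y) ∂μ := by
        refine lintegral_mono fun y => ?_
        rw [← ENNReal.ofReal_mul ha, ← ENNReal.ofReal_mul hb,
          ← ENNReal.ofReal_add (mul_nonneg ha (hf y)) (mul_nonneg hb (hg y))]
        exact ENNReal.ofReal_le_ofReal (hF y)
    _ = ENNReal.ofReal a * ∫⁻ y, ENNReal.ofReal (f y) ∂μ
          + ENNReal.ofReal b * ∫⁻ y, ENNReal.ofReal (g y) ∂μ := by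
        rw [lintegral_add_left (by fun_prop), lintegral_const_mul' _ _ ENNReal.ofReal_ne_top,
          lintegral_const_mul' _ _ ENNReal.ofReal_ne_top]
    _ = _ := by
        rw [ENNReal.ofReal_add (by positivity) (by positivity), ENNReal.ofReal_mul ha,
          ENNReal.ofReal_mul hb, ENNReal.ofReal_toReal hf_fin.ne, ENNReal.ofReal_toReal hg_fin.ne]

/-- If a measure `μ` on `ℝ` integrates `|y|^2` and `|y|^(2γ+2)` and the coefficient `σ`
is bounded by `Cσ`, then the integral of the second-order Taylor remainder of
`z ↦ |z|^(2γ+2)` at `x` in direction `σ(t,x) y` is bounded by `C (1 + |x|^(2γ))`,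
uniformly in `(t,x) ∈ [0,T] × ℝ`. -/
theorem stmt_3 (T : ℝ) (γ : ℕ) (μ : Measure ℝ)
    (hμ2 : ∫⁻ y, ENNReal.ofReal (|y| ^ 2) ∂μ < ⊤)
    (hμγ : ∫⁻ y, ENNReal.ofReal (|y| ^ (2 * γ + 2)) ∂μ < ⊤)
    (σ : ℝ → ℝ → ℝ) (Cσ : ℝ) (hσ : ∀ t x, |σ t x| ≤ Cσ) :
    ∃ C : ℝ, ∀ t ∈ Set.Icc (0 : ℝ) T, ∀ x : ℝ,
      ∫⁻ y, ENNReal.ofReal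
          (|(|x + σ t x * y|) ^ (2 * γ + 2) - |x| ^ (2 * γ + 2)
            - ((2 * γ + 2 : ℝ) * |x| ^ (2 * γ) * x) * (σ t x * y)|) ∂μ
        ≤ ENNReal.ofReal (C * (1 + |x| ^ (2 * γ))) := by
  have hCσ : 0 ≤ Cσ := (abs_nonneg _).trans (hσ 0 0)
  set A := (∫⁻ y, ENNReal.ofReal (|y| ^ 2) ∂μ).toReal
  set B := (∫⁻ y, ENNReal.ofReal (|y| ^ (2 * γ + 2)) ∂μ).toReal
  set K : ℝ := 2 ^ (2 * γ + 2)
  refine ⟨K * (Cσ ^ 2 * A + Cσ ^ (2 * γ + 2) * B), fun t _ x => ?_⟩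
  have hpointwise : ∀ y : ℝ,
      |(|x + σ t x * y|) ^ (2 * γ + 2) - |x| ^ (2 * γ + 2)
        - ((2 * γ + 2 : ℝ) * |x| ^ (2 * γ) * x) * (σ t x * y)|
      ≤ (K * Cσ ^ 2 * |x| ^ (2 * γ)) * |y| ^ 2 + (K * Cσ ^ (2 * γ + 2)) * |y| ^ (2 * γ + 2) := by
    intro y
    have hσy : |σ t x * y| ≤ Cσ * |y| := by
      rw [abs_mul]; exact mul_le_mul_of_nonneg_right (hσ t x) (abs_nonneg y)
    calc _ ≤ K * (|x| ^ (2 * γ) * (σ t x * y) ^ 2 + |σ t x * y| ^ (2 * γ + 2)) :=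
          abs_abs_add_pow_sub_abs_pow_sub_mul_le γ x (σ t x * y)
      _ ≤ K * (|x| ^ (2 * γ) * (Cσ * |y|) ^ 2 + (Cσ * |y|) ^ (2 * γ + 2)) := by
          rw [← sq_abs (σ t x * y)]; gcongr
      _ = _ := by ring
  refine (lintegral_ofReal_le_of_le_mul_add_mul (by positivity) (by positivity)
    (fun y => by positivity) (fun y => by positivity) (by fun_prop) hμ2 hμγ hpointwise).trans ?_
  have hA : 0 ≤ A := ENNReal.toReal_nonneg
  have hB : 0 ≤ B := ENNReal.toReal_nonneg
  gcongr
  nlinarith [pow_nonneg (abs_nonneg x) (2 * γ), show 0 ≤ K * (Cσ ^ 2 * A) by positivity,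
    show 0 ≤ K * (Cσ ^ (2 * γ + 2) * B) by positivity]
end

section
/- Let A be a finite set, g : A × A → ℝ with g(i,i) = 0 and the non-free-loop property, and suppose u : A → ℝ satisfies u(j) ≥ max_{k≠j}(u(k) − g(j,k)) for all j ∈ A. Then there exists j ∈ A with u(j) > max_{k≠j}(u(k) − g(j,k)). -/
/-- If the switching costs `g` have zero diagonal, are nonnegative and satisfy the
non-free-loop property, and `u` satisfies `u k - g j k ≤ u j` for all `k ≠ j`, then there
exists an index `j` where the obstacle constraint is strict. -/
theorem stmt_6 (m : ℕ) (hm : 0 < m) (g : Fin m → Fin m → ℝ)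
    (hdiag : ∀ i, g i i = 0) (hnn : ∀ i j, 0 ≤ g i j)
    (hloop : ∀ (N : ℕ) (c : ℕ → Fin m), 2 ≤ N →
      (∀ k l, k < N → l < N → c k = c l → k = l) → c N = c 0 →
      0 < ∑ l ∈ Finset.range N, g (c l) (c (l + 1)))
    (u : Fin m → ℝ)
    (hobs : ∀ j k : Fin m, k ≠ j → u k - g j k ≤ u j) :
    ∃ j : Fin m, ∀ k : Fin m, k ≠ j → u k - g j k < u j := by
  by_contra hcon
  push_neg at hcon
  have hch : ∀ j : Fin m, ∃ k, k ≠ j ∧ u j = u k - g j k := by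
    intro j
    obtain ⟨k, hk, hle⟩ := hcon j
    exact ⟨k, hk, le_antisymm hle (hobs j k hk)⟩
  choose f hf hfe using hch
  set c : ℕ → Fin m := fun n => f^[n] ⟨0, hm⟩ with hc
  have hcs : ∀ n, c (n + 1) = f (c n) := fun n => Function.iterate_succ_apply' f n _
  have key : ∀ n, g (c n) (c (n + 1)) = u (c (n + 1)) - u (c n) := by
    intro n
    rw [hcs n]
    have := hfe (c n)
    linarith
  have hrep : ∃ n, ∃ a < n, c a = c n := by
    obtain ⟨i, j, hij, hcij⟩ := Fintype.exists_ne_map_eq_of_card_lt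
      (fun i : Fin (m + 1) => c i) (by simp)
    rcases lt_or_gt_of_ne (fun h => hij (Fin.ext h) : (i : ℕ) ≠ (j : ℕ)) with hlt | hlt
    · exact ⟨j, i, hlt, hcij⟩
    · exact ⟨i, j, hlt, hcij.symm⟩
  obtain ⟨a, hab, hcab⟩ := Nat.find_spec hrep
  set b := Nat.find hrep with hb
  have hinj : ∀ k l, k < b → l < b → c k = c l → k = l := by
    intro k l hk hl hkl
    by_contra hne
    rcases lt_or_gt_of_ne hne with h' | h'
    · exact Nat.find_min hrep hl ⟨k, h', hkl⟩
    · exact Nat.find_min hrep hk ⟨l, h', hkl.symm⟩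
  set N := b - a with hN
  have hNb : a + N = b := by omega
  have hN2 : 2 ≤ N := by
    by_contra h'
    have hN1 : N = 1 := by omega
    have h1 : c b = f (c a) := by rw [← hNb, hN1, hcs a]
    exact hf (c a) (by rw [← h1, ← hcab])
  set c' : ℕ → Fin m := fun l => c (a + l) with hc'
  have hdist : ∀ k l, k < N → l < N → c' k = c' l → k = l := by
    intro k l hk hl hkl
    have := hinj (a + k) (a + l) (by omega) (by omega) hkl
    omega
  have hclosed : c' N = c' 0 := by
    simp only [hc', hNb, Nat.add_zero]
    exact hcab.symm
  have hpos := hloop N c' hN2 hdist hclosed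
  have hsum : ∑ l ∈ Finset.range N, g (c' l) (c' (l + 1)) = u (c' N) - u (c' 0) := by
    rw [← Finset.sum_range_sub (fun l => u (c' l))]
    refine Finset.sum_congr rfl fun l _ => ?_
    have : a + (l + 1) = (a + l) + 1 := by omega
    simp only [hc', this]
    exact key (a + l)
  rw [hsum, hclosed, sub_self] at hpos
  exact lt_irrefl 0 hpos
end

section
/- Let Π be a measure on ℝ integrating y ↦ |y|² + |y|⁴, let σ : [0,T] × ℝ → ℝ be L-Lipschitz in x uniformly in t, and let u, w : [0,T] × ℝ → ℝ, with ψ(t,x) = ρ|x − x̄|⁴ + |t − t̄|². Suppose (t₀, x₀, y₀) maximizes (t,x,y) ↦ u(t,x) − w(t,y) − |x−y|²/ε − ψ(t,x). Then for every real z, u(t₀, x₀ + σ(t₀,x₀)z) − u(t₀,x₀) − q_u σ(t₀,x₀)z ≤ w(t₀, y₀ + σ(t₀,y₀)z) − w(t₀,y₀) − q_w σ(t₀,y₀)z + ε^{-1} L² |x₀ − y₀|² z² + [ψ(t₀, x₀ + σ(t₀,x₀)z) − ψ(t₀,x₀) − D_xψ(t₀,x₀)σ(t₀,x₀)z], where q_u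 = 2(x₀−y₀)/ε + D_xψ(t₀,x₀) and q_w = 2(x₀−y₀)/ε. -/
/-!
Testing the maximality of `(t₀, x₀, y₀)` at the shifted pair `(x₀ + σ(t₀,x₀)z, y₀ + σ(t₀,y₀)z)`
and expanding the square `(x - y)²/ε` leaves the increments of `u` and `w` with the first-order
terms `2(x₀-y₀)/ε · σz`, plus the remainder `((σ(t₀,x₀) - σ(t₀,y₀)) z)²/ε`, which the Lipschitz
bound on `σ` controls by `ε⁻¹ L² (x₀-y₀)² z²`.
-/

theorem increment_le_of_forall_penalized_le {K : Type*} [Field K] [LinearOrder K]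
    [IsStrictOrderedRing K] {f g Ψ : K → K} {ε x₀ y₀ : K}
    (hmax : ∀ x y, f x - g y - (x - y) ^ 2 / ε - Ψ x
      ≤ f x₀ - g y₀ - (x₀ - y₀) ^ 2 / ε - Ψ x₀) (d d' : K) :
    f (x₀ + d') - f x₀ - 2 * (x₀ - y₀) / ε * d'
      ≤ g (y₀ + d) - g y₀ - 2 * (x₀ - y₀) / ε * d + (d' - d) ^ 2 / ε
          + (Ψ (x₀ + d') - Ψ x₀) := by
  have hshift := hmax (x₀ + d') (y₀ + d)
  have hexpand : (x₀ + d' - (y₀ + d)) ^ 2 / ε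
      = (x₀ - y₀) ^ 2 / ε + 2 * (x₀ - y₀) / ε * d' - 2 * (x₀ - y₀) / ε * d
          + (d' - d) ^ 2 / ε := by
    ring
  linarith

theorem sq_le_sq_mul_sq_of_abs_le {α : Type*} [CommRing α] [LinearOrder α] [IsStrictOrderedRing α]
    {a b L : α} (h : |a| ≤ L * |b|) : a ^ 2 ≤ L ^ 2 * b ^ 2 :=
  calc a ^ 2 = |a| ^ 2 := (sq_abs a).symm
    _ ≤ (L * |b|) ^ 2 := pow_le_pow_left₀ (abs_nonneg a) h 2
    _ = L ^ 2 * b ^ 2 := by rw [mul_pow, sq_abs]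

theorem stmt_14_general (T L ε ρ tbar xbar t₀ x₀ y₀ : ℝ)
    (hε : 0 < ε)
    (σ u w : ℝ → ℝ → ℝ)
    (hσ : ∀ t x y : ℝ, |σ t x - σ t y| ≤ L * |x - y|)
    (ht₀ : t₀ ∈ Set.Icc (0 : ℝ) T)
    (hmax : ∀ t ∈ Set.Icc (0 : ℝ) T, ∀ x y : ℝ,
      u t x - w t y - (x - y) ^ 2 / ε - (ρ * (x - xbar) ^ 4 + (t - tbar) ^ 2)
        ≤ u t₀ x₀ - w t₀ y₀ - (x₀ - y₀) ^ 2 / ε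
            - (ρ * (x₀ - xbar) ^ 4 + (t₀ - tbar) ^ 2)) :
    ∀ z : ℝ,
      u t₀ (x₀ + σ t₀ x₀ * z) - u t₀ x₀
          - (2 * (x₀ - y₀) / ε + 4 * ρ * (x₀ - xbar) ^ 3) * (σ t₀ x₀ * z)
        ≤ w t₀ (y₀ + σ t₀ y₀ * z) - w t₀ y₀ - (2 * (x₀ - y₀) / ε) * (σ t₀ y₀ * z)
            + ε⁻¹ * L ^ 2 * (x₀ - y₀) ^ 2 * z ^ 2
            + ((ρ * (x₀ + σ t₀ x₀ * z - xbar) ^ 4 + (t₀ - tbar) ^ 2)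
                - (ρ * (x₀ - xbar) ^ 4 + (t₀ - tbar) ^ 2)
                - 4 * ρ * (x₀ - xbar) ^ 3 * (σ t₀ x₀ * z)) := by
  intro z
  have hincrement := increment_le_of_forall_penalized_le
    (Ψ := fun x => ρ * (x - xbar) ^ 4 + (t₀ - tbar) ^ 2) (hmax t₀ ht₀) (σ t₀ y₀ * z) (σ t₀ x₀ * z)
  have hremainder : (σ t₀ x₀ * z - σ t₀ y₀ * z) ^ 2 / ε ≤ ε⁻¹ * L ^ 2 * (x₀ - y₀) ^ 2 * z ^ 2 :=
    calc (σ t₀ x₀ * z - σ t₀ y₀ * z) ^ 2 / ε = ε⁻¹ * ((σ t₀ x₀ - σ t₀ y₀) ^ 2 * z ^ 2) := by ring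
      _ ≤ ε⁻¹ * (L ^ 2 * (x₀ - y₀) ^ 2 * z ^ 2) := by
        gcongr
        exact sq_le_sq_mul_sq_of_abs_le (hσ t₀ x₀ y₀)
      _ = ε⁻¹ * L ^ 2 * (x₀ - y₀) ^ 2 * z ^ 2 := by ring
  linarith

/-- Key pointwise inequality for the doubled variables in the comparison proof.  If
`(t₀, x₀, y₀)` maximizes `(t,x,y) ↦ u t x - w t y - (x-y)²/ε - ψ t x` over
`[0,T] × ℝ × ℝ`, where `ψ t x = ρ (x - x̄)⁴ + (t - t̄)²`, and `σ` is `L`-Lipschitz in the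
space variable, then for every `z`,
`u t₀ (x₀+σ(t₀,x₀)z) - u t₀ x₀ - q_u σ(t₀,x₀)z
  ≤ w t₀ (y₀+σ(t₀,y₀)z) - w t₀ y₀ - q_w σ(t₀,y₀)z + ε⁻¹ L² (x₀-y₀)² z²
    + [ψ t₀ (x₀+σ(t₀,x₀)z) - ψ t₀ x₀ - D_xψ(t₀,x₀) σ(t₀,x₀)z]`,
with `q_u = 2(x₀-y₀)/ε + D_xψ(t₀,x₀)`, `q_w = 2(x₀-y₀)/ε`,
`D_xψ(t₀,x₀) = 4ρ(x₀-x̄)³`. -/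
theorem stmt_14 (T L ε ρ tbar xbar t₀ x₀ y₀ : ℝ)
    (hT : 0 ≤ T) (hε : 0 < ε) (hL : 0 ≤ L)
    (σ u w : ℝ → ℝ → ℝ)
    (hσ : ∀ t x y : ℝ, |σ t x - σ t y| ≤ L * |x - y|)
    (ht₀ : t₀ ∈ Set.Icc (0 : ℝ) T)
    (hmax : ∀ t ∈ Set.Icc (0 : ℝ) T, ∀ x y : ℝ,
      u t x - w t y - (x - y) ^ 2 / ε - (ρ * (x - xbar) ^ 4 + (t - tbar) ^ 2)
        ≤ u t₀ x₀ - w t₀ y₀ - (x₀ - y₀) ^ 2 / ε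
            - (ρ * (x₀ - xbar) ^ 4 + (t₀ - tbar) ^ 2)) :
    ∀ z : ℝ,
      u t₀ (x₀ + σ t₀ x₀ * z) - u t₀ x₀
          - (2 * (x₀ - y₀) / ε + 4 * ρ * (x₀ - xbar) ^ 3) * (σ t₀ x₀ * z)
        ≤ w t₀ (y₀ + σ t₀ y₀ * z) - w t₀ y₀ - (2 * (x₀ - y₀) / ε) * (σ t₀ y₀ * z)
            + ε⁻¹ * L ^ 2 * (x₀ - y₀) ^ 2 * z ^ 2
            + ((ρ * (x₀ + σ t₀ x₀ * z - xbar) ^ 4 + (t₀ - tbar) ^ 2)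
                - (ρ * (x₀ - xbar) ^ 4 + (t₀ - tbar) ^ 2)
                - 4 * ρ * (x₀ - xbar) ^ 3 * (σ t₀ x₀ * z)) :=
  stmt_14_general T L ε ρ tbar xbar t₀ x₀ y₀ hε σ u w hσ ht₀ hmax
end
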